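/- Let M ≥ 3 be an odd integer, n ∈ {1,2}, and Θ̄ = (θ̄_1,…,θ̄_{M-1}) with θ̄_k := k n π / M (and θ̄_j := j n π / M for any integer j). Then for all l, m ∈ {1,…,M-1}: sin²(θ̄_1) · [∇F̄(Θ̄)]_{lm} = 2 sin²(θ̄_1) - (-1)^m sin(2θ̄_1) sin(2θ̄_m) if l = m; sin²(θ̄_1) · [∇F̄(Θ̄)]_{lm} = (-1)^{m+1} sin(2θ̄_1)(sin(2θ̄_m) + (-1)^l sin(2θ̄_{l-m})) if l < m; and sin²(θ̄_1) · [∇F̄(Θ̄)]_{lm} = (-1)^{m+1} sin(2θ̄_1)(sin(2θ̄_m) - (-1)^l sin(2θ̄_{l-m})) if m < l. -/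

import Mathlib

/-!
Write `α = nπ/M` and `q = -e^{-2iα}`. At `Θ̄` the summands of `𝒦̄` and `𝓗̄_l` are
`(-1)^k e^{-2ikα} = q^k` and `(-1)^{l+k} e^{2i(l-k)α} = q^{-l} q^k`, and `q^M = -1` because
`M` is odd.
Summing the geometric series, each of `𝒦̄(Θ̄)` and `𝓗̄_l(Θ̄)` is, like `-i tan α`, a solution `x`
of `x (q - 1) = q + 1`, so `𝓗̄_l(Θ̄) = 𝒦̄(Θ̄) = -i tan α`.

Moving only `θ_m`, the functions `𝒦̄` and `𝓗̄_l` (`l ≠ m`) change in the single summand with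
`k = m`, while in `𝓗̄_m` every summand with `k ≠ m` picks up the factor `e^{2i(θ_m - θ̄_m)}`;
so all of them are `a + b e^{±2iθ_m}` along that coordinate line and their derivatives are explicit.
As `𝓗̄_l = 𝒦̄ = -i tan α` at `Θ̄`, the quotient rule gives
`sin² α · ∂F̄_l/∂θ_m = sin α cos α · Re(∂𝓗̄_l/∂θ_m - ∂𝒦̄/∂θ_m)`, and the three cases are
trigonometric bookkeeping.
-/


open Complex Real Finset

noncomputable section

/-- The angles `θ_0 = 0`, `θ_j = Θ_j` for `1 ≤ j ≤ M-1`, read off a vector `Θ ∈ ℝ^{M-1}`. -/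
def thN (M : ℕ) (Θ : Fin (M - 1) → ℝ) (j : ℕ) : ℝ :=
  if h : 1 ≤ j ∧ j ≤ M - 1 then Θ ⟨j - 1, by omega⟩ else 0

/-- `𝒦̄(Θ)`. -/
def KbarV (M : ℕ) (Θ : Fin (M - 1) → ℝ) : ℂ :=
  (1 + (-1 : ℂ) ^ M) / 2 +
    (-1 : ℂ) ^ M * ∑ k ∈ Finset.Icc 1 (M - 1),
      (-1 : ℂ) ^ k * Complex.exp (-2 * Complex.I * (thN M Θ k : ℂ))

/-- `𝓗̄_l(Θ)`. -/
def HbarV (M : ℕ) (Θ : Fin (M - 1) → ℝ) (l : ℕ) : ℂ :=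
  (1 - (-1 : ℂ) ^ M) / 2 +
    (∑ k ∈ Finset.range l,
      (-1 : ℂ) ^ (l + k) * Complex.exp (2 * Complex.I * ((thN M Θ l - thN M Θ k : ℝ) : ℂ))) +
    (-1 : ℂ) ^ M * ∑ k ∈ Finset.Icc l (M - 1),
      (-1 : ℂ) ^ (l + k) * Complex.exp (2 * Complex.I * ((thN M Θ l - thN M Θ k : ℝ) : ℂ))

/-- `F̄_l(Θ) = Im(𝓗̄_l(Θ)/𝒦̄(Θ))`. -/
def FbarV (M : ℕ) (l : ℕ) (Θ : Fin (M - 1) → ℝ) : ℝ := (HbarV M Θ l / KbarV M Θ).im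

/-- The partial derivative `∂F̄_l/∂θ_m` at `Θ` (here `m : Fin (M-1)` indexes `θ_{m+1}`). -/
def partialF (M : ℕ) (l : ℕ) (Θ : Fin (M - 1) → ℝ) (m : Fin (M - 1)) : ℝ :=
  deriv (fun t : ℝ => FbarV M l (Function.update Θ m t)) (Θ m)

/-- The vector `Θ̄ = (θ̄_1, …, θ̄_{M-1})`, `θ̄_k = k n π / M`. -/
def ThbarV (M n : ℕ) : Fin (M - 1) → ℝ := fun k => ((k : ℕ) + 1) * n * π / M

/-- The angles `θ̄_j = j n π / M`, for an arbitrary integer `j`. -/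
def thbarZ (M n : ℕ) (j : ℤ) : ℝ := (j : ℝ) * n * π / M

open Function (update)

theorem sub_one_lt_sub_one_of_le {m M : ℕ} (hm1 : 1 ≤ m) (hm2 : m ≤ M - 1) : m - 1 < M - 1 := by
  omega

theorem sum_eq_sum_add_ite_of_forall_ne {α β : Type*} [DecidableEq α] [AddCommGroup β]
    (s : Finset α) {f g : α → β} {a : α} (h : ∀ x, x ≠ a → f x = g x) :
    ∑ x ∈ s, f x = ∑ x ∈ s, g x + if a ∈ s then f a - g a else 0 := by
  split_ifs with ha
  · rw [← add_sum_erase s f ha, ← add_sum_erase s g ha,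
      sum_congr rfl fun x hx => h x (ne_of_mem_erase hx)]
    abel
  · rw [add_zero]
    exact sum_congr rfl fun x hx => h x (ne_of_mem_of_not_mem hx ha)

theorem geom_sum_Icc_mul_sub_one {R : Type*} [CommRing R] (q : R) {a M : ℕ} (ha : a ≤ M)
    (hM : 1 ≤ M) : (∑ k ∈ Icc a (M - 1), q ^ k) * (q - 1) = q ^ M - q ^ a := by
  rw [← Ico_add_one_right_eq_Icc, Nat.sub_add_cancel hM, sum_Ico_eq_sub _ ha, sub_mul,
    geom_sum_mul, geom_sum_mul]
  ring

theorem eq_of_mul_sub_one_eq {K : Type*} [Field K] [NeZero (2 : K)] {x y q : K}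
    (hx : x * (q - 1) = q + 1) (hy : y * (q - 1) = q + 1) : x = y := by
  have hq : q - 1 ≠ 0 := fun h => two_ne_zero (α := K) (by linear_combination -hx + x * h - h)
  exact mul_right_cancel₀ hq (hx.trans hy.symm)

theorem hasDerivAt_of_forall_eq_add_mul_cexp {f : ℝ → ℂ} {a b σ : ℂ}
    (hf : ∀ t : ℝ, f t = a + b * cexp (σ * t)) (t₀ : ℝ) :
    HasDerivAt f (σ * b * cexp (σ * t₀)) t₀ := by
  have hexp : HasDerivAt (fun t : ℝ => cexp (σ * t)) (cexp (σ * t₀) * σ) t₀ := by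
    simpa using ((hasDerivAt_id (t₀ : ℂ)).const_mul σ).cexp.comp_ofReal
  rw [funext hf]
  exact ((hexp.const_mul b).const_add a).congr_deriv (by ring)

theorem cexp_two_mul_I_sub (x y : ℝ) :
    cexp (2 * I * ↑(x - y)) = cexp (2 * I * x) * cexp (-2 * I * y) := by
  rw [← Complex.exp_add]
  push_cast
  ring_nf

theorem neg_one_pow_mul_cexp (σ : ℂ) (x : ℝ) (k : ℕ) :
    (-1 : ℂ) ^ k * cexp (σ * ↑(k * x)) = (-cexp (σ * x)) ^ k := by
  rw [neg_pow (cexp _), ← Complex.exp_nat_mul]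
  push_cast
  ring_nf

theorem neg_one_pow_re (k : ℕ) : ((-1 : ℂ) ^ k).re = (-1) ^ k := by
  rw [← Complex.ofReal_one, ← Complex.ofReal_neg, ← Complex.ofReal_pow, Complex.ofReal_re]

theorem neg_one_pow_im (k : ℕ) : ((-1 : ℂ) ^ k).im = 0 := by
  rw [← Complex.ofReal_one, ← Complex.ofReal_neg, ← Complex.ofReal_pow, Complex.ofReal_im]

theorem neg_I_mul_tan_mul_sub_one (x : ℝ) (hc : Real.cos x ≠ 0) :
    -I * ↑(Real.tan x) * (-cexp (-2 * I * x) - 1) = -cexp (-2 * I * x) + 1 := by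
  have he : cexp (-2 * I * x) = (↑(Real.cos x) - ↑(Real.sin x) * I) ^ 2 := by
    rw [show -2 * I * x = (2 : ℕ) * (↑(-x) * I) by push_cast; ring, Complex.exp_nat_mul,
      Complex.exp_mul_I, ← Complex.ofReal_cos, ← Complex.ofReal_sin, Real.cos_neg, Real.sin_neg]
    push_cast
    ring
  have hsc : (↑(Real.sin x) : ℂ) ^ 2 + ↑(Real.cos x) ^ 2 = 1 := by
    exact_mod_cast Real.sin_sq_add_cos_sq x
  have hc' : (↑(Real.cos x) : ℂ) ≠ 0 := Complex.ofReal_ne_zero.2 hc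
  rw [he, Real.tan_eq_sin_div_cos, Complex.ofReal_div]
  field_simp
  linear_combination (↑(Real.cos x) - I * ↑(Real.sin x)) * hsc +
    (I * ↑(Real.sin x) ^ 3 - ↑(Real.cos x) * ↑(Real.sin x) ^ 2) * Complex.I_sq

theorem sin_sq_mul_im_div {x : ℝ} (hs : Real.sin x ≠ 0) (hc : Real.cos x ≠ 0) (A B : ℂ) :
    Real.sin x ^ 2 * ((A * (-I * (Real.tan x : ℂ)) - -I * (Real.tan x : ℂ) * B) /
      (-I * (Real.tan x : ℂ)) ^ 2).im = Real.sin x * Real.cos x * (A - B).re := by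
  have hc' : (Real.cos x : ℂ) ≠ 0 := Complex.ofReal_ne_zero.2 hc
  have hs' : (Real.sin x : ℂ) ≠ 0 := Complex.ofReal_ne_zero.2 hs
  have hκ : (A * (-I * (Real.tan x : ℂ)) - -I * (Real.tan x : ℂ) * B) /
      (-I * (Real.tan x : ℂ)) ^ 2 = (A - B) * (I * ↑(Real.cos x / Real.sin x)) := by
    rw [Real.tan_eq_sin_div_cos, Complex.ofReal_div, Complex.ofReal_div]
    field_simp
    linear_combination (B - A) * Complex.I_sq
  rw [hκ, Complex.mul_im, Complex.mul_re, Complex.mul_im]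
  simp only [Complex.I_re, Complex.I_im, Complex.ofReal_re, Complex.ofReal_im]
  field_simp
  ring

theorem cos_nat_mul_pi_div_ne_zero {M : ℕ} (hM : Odd M) (n : ℕ) : Real.cos (n * π / M) ≠ 0 := by
  rw [Ne, Real.cos_eq_zero_iff]
  rintro ⟨k, hk⟩
  have hM0 : (M : ℝ) ≠ 0 := by exact_mod_cast hM.pos.ne'
  have h : ((2 * n : ℤ) : ℝ) = ((2 * k + 1) * M : ℤ) := by
    field_simp at hk
    push_cast
    nlinarith [pi_pos]
  have hodd : Odd ((2 * k + 1) * (M : ℤ)) := (odd_two_mul_add_one k).mul hM.natCast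
  rw [← Int.cast_inj.1 h] at hodd
  exact Int.not_odd_iff_even.2 (even_two_mul _) hodd

section CoordinateLine

variable {M : ℕ} (Θ : Fin (M - 1) → ℝ)

theorem thN_of_mem {m : ℕ} (hm1 : 1 ≤ m) (hm2 : m ≤ M - 1) :
    thN M Θ m = Θ ⟨m - 1, sub_one_lt_sub_one_of_le hm1 hm2⟩ :=
  dif_pos ⟨hm1, hm2⟩

theorem thN_update {m : ℕ} (hm1 : 1 ≤ m) (hm2 : m ≤ M - 1) (t : ℝ) (k : ℕ) :
    thN M (update Θ ⟨m - 1, sub_one_lt_sub_one_of_le hm1 hm2⟩ t) k =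
      if k = m then t else thN M Θ k := by
  unfold thN
  by_cases hkm : k = m
  · subst hkm
    simp [hm1, hm2]
  · rw [if_neg hkm]
    split_ifs
    · exact Function.update_of_ne (by simp [Fin.ext_iff]; omega) _ _
    · rfl

theorem hasDerivAt_KbarV_update {m : ℕ} (hm1 : 1 ≤ m) (hm2 : m ≤ M - 1) :
    HasDerivAt (fun t => KbarV M (update Θ ⟨m - 1, sub_one_lt_sub_one_of_le hm1 hm2⟩ t))
      (-2 * I * ((-1) ^ M * (-1) ^ m) * cexp (-2 * I * Θ ⟨m - 1, sub_one_lt_sub_one_of_le hm1 hm2⟩))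
      (Θ ⟨m - 1, sub_one_lt_sub_one_of_le hm1 hm2⟩) := by
  refine hasDerivAt_of_forall_eq_add_mul_cexp
    (a := KbarV M Θ - (-1) ^ M * (-1) ^ m *
      cexp (-2 * I * Θ ⟨m - 1, sub_one_lt_sub_one_of_le hm1 hm2⟩)) (fun t => ?_) _
  rw [KbarV, KbarV, sum_eq_sum_add_ite_of_forall_ne _ (a := m)
      fun k hk => by rw [thN_update Θ hm1 hm2, if_neg hk],
    if_pos (mem_Icc.2 ⟨hm1, hm2⟩), thN_update Θ hm1 hm2, if_pos rfl, thN_of_mem Θ hm1 hm2]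
  ring

theorem hasDerivAt_HbarV_update_of_ne {l m : ℕ} (hm1 : 1 ≤ m) (hm2 : m ≤ M - 1) (hlm : l ≠ m) :
    HasDerivAt (fun t => HbarV M (update Θ ⟨m - 1, sub_one_lt_sub_one_of_le hm1 hm2⟩ t) l)
      (-2 * I * ((if m < l then 1 else (-1) ^ M) * (-1) ^ (l + m) * cexp (2 * I * thN M Θ l)) *
        cexp (-2 * I * Θ ⟨m - 1, sub_one_lt_sub_one_of_le hm1 hm2⟩))
      (Θ ⟨m - 1, sub_one_lt_sub_one_of_le hm1 hm2⟩) := by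
  refine hasDerivAt_of_forall_eq_add_mul_cexp (a := HbarV M Θ l -
    (if m < l then 1 else (-1) ^ M) * (-1) ^ (l + m) * cexp (2 * I * thN M Θ l) *
      cexp (-2 * I * Θ ⟨m - 1, sub_one_lt_sub_one_of_le hm1 hm2⟩)) (fun t => ?_) _
  have hterm : ∀ k, k ≠ m → (-1 : ℂ) ^ (l + k) *
      cexp (2 * I * ↑(thN M (update Θ ⟨m - 1, sub_one_lt_sub_one_of_le hm1 hm2⟩ t) l -
        thN M (update Θ ⟨m - 1, sub_one_lt_sub_one_of_le hm1 hm2⟩ t) k)) =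
      (-1 : ℂ) ^ (l + k) * cexp (2 * I * ↑(thN M Θ l - thN M Θ k)) := fun k hk => by
    rw [thN_update Θ hm1 hm2, thN_update Θ hm1 hm2, if_neg hlm, if_neg hk]
  rw [HbarV, HbarV, sum_eq_sum_add_ite_of_forall_ne _ hterm,
    sum_eq_sum_add_ite_of_forall_ne _ hterm, thN_update Θ hm1 hm2, thN_update Θ hm1 hm2,
    if_neg hlm, if_pos rfl, thN_of_mem Θ hm1 hm2, cexp_two_mul_I_sub, cexp_two_mul_I_sub]
  by_cases hml : m < l
  · rw [if_pos hml, if_pos (mem_range.2 hml), if_neg (by simp only [mem_Icc]; omega)]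
    ring
  · rw [if_neg hml, if_neg (by simpa using hml), if_pos (mem_Icc.2 ⟨by omega, hm2⟩)]
    ring

theorem hasDerivAt_HbarV_update_self {m : ℕ} (hm1 : 1 ≤ m) (hm2 : m ≤ M - 1) :
    HasDerivAt (fun t => HbarV M (update Θ ⟨m - 1, sub_one_lt_sub_one_of_le hm1 hm2⟩ t) m)
      (2 * I * (HbarV M Θ m - ((1 - (-1) ^ M) / 2 + (-1) ^ M)))
      (Θ ⟨m - 1, sub_one_lt_sub_one_of_le hm1 hm2⟩) := by
  have hterm : ∀ t : ℝ, ∀ k, k ≠ m → (-1 : ℂ) ^ (m + k) *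
      cexp (2 * I * ↑(thN M (update Θ ⟨m - 1, sub_one_lt_sub_one_of_le hm1 hm2⟩ t) m -
        thN M (update Θ ⟨m - 1, sub_one_lt_sub_one_of_le hm1 hm2⟩ t) k)) =
      (-1 : ℂ) ^ (m + k) * cexp (-2 * I * thN M Θ k) * cexp (2 * I * t) := fun t k hk => by
    rw [thN_update Θ hm1 hm2, thN_update Θ hm1 hm2, if_pos rfl, if_neg hk, cexp_two_mul_I_sub]
    ring
  have hpath : ∀ t : ℝ, HbarV M (update Θ ⟨m - 1, sub_one_lt_sub_one_of_le hm1 hm2⟩ t) m =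
      ((1 - (-1) ^ M) / 2 + (-1) ^ M) +
        ((∑ k ∈ range m, (-1) ^ (m + k) * cexp (-2 * I * thN M Θ k)) +
          (-1) ^ M * (∑ k ∈ Icc m (M - 1), (-1) ^ (m + k) * cexp (-2 * I * thN M Θ k) -
            cexp (-2 * I * thN M Θ m))) * cexp (2 * I * t) := fun t => by
    rw [HbarV, sum_eq_sum_add_ite_of_forall_ne _ (hterm t),
      sum_eq_sum_add_ite_of_forall_ne _ (hterm t), if_neg (by simp),
      if_pos (mem_Icc.2 ⟨le_rfl, hm2⟩), ← sum_mul, ← sum_mul, sub_self, Complex.ofReal_zero,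
      mul_zero, Complex.exp_zero, Even.neg_one_pow ⟨m, rfl⟩]
    ring
  have hH := hpath (Θ ⟨m - 1, sub_one_lt_sub_one_of_le hm1 hm2⟩)
  rw [Function.update_eq_self] at hH
  rw [hH]
  convert hasDerivAt_of_forall_eq_add_mul_cexp hpath _ using 1
  ring

end CoordinateLine

theorem partialF_eq_im {M l : ℕ} {Θ : Fin (M - 1) → ℝ} {j : Fin (M - 1)} {H' K' : ℂ}
    (hH : HasDerivAt (fun t => HbarV M (update Θ j t) l) H' (Θ j))
    (hK : HasDerivAt (fun t => KbarV M (update Θ j t)) K' (Θ j)) (hK0 : KbarV M Θ ≠ 0) :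
    partialF M l Θ j = ((H' * KbarV M Θ - HbarV M Θ l * K') / KbarV M Θ ^ 2).im := by
  rw [← Function.update_eq_self j Θ] at hK0
  have hF := (Complex.imCLM.hasFDerivAt.comp_hasDerivAt _ (hH.div hK hK0)).deriv
  rw [Function.update_eq_self] at hF
  exact hF

theorem thN_ThbarV (M n : ℕ) {k : ℕ} (hk : k ≤ M - 1) :
    thN M (ThbarV M n) k = k * (n * π / M) := by
  rcases Nat.eq_zero_or_pos k with rfl | hk0
  · simp [thN]
  · rw [thN_of_mem _ hk0 hk, ThbarV]
    simp only [Nat.cast_sub hk0]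
    push_cast
    ring

theorem ThbarV_apply (M n : ℕ) {m : ℕ} (hm1 : 1 ≤ m) (hm2 : m ≤ M - 1) :
    ThbarV M n ⟨m - 1, sub_one_lt_sub_one_of_le hm1 hm2⟩ = m * (n * π / M) := by
  rw [← thN_of_mem (ThbarV M n) hm1 hm2, thN_ThbarV M n hm2]

theorem neg_cexp_neg_two_mul_I_pow {M : ℕ} (hM : Odd M) (n : ℕ) :
    (-cexp (-2 * I * ↑(n * π / M))) ^ M = -1 := by
  have hM0 : (M : ℂ) ≠ 0 := Nat.cast_ne_zero.2 hM.pos.ne'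
  rw [neg_pow, hM.neg_one_pow, ← Complex.exp_nat_mul,
    show (M : ℂ) * (-2 * I * ↑(n * π / M)) = (-n : ℤ) * (2 * π * I) by push_cast; field_simp,
    Complex.exp_int_mul_two_pi_mul_I, mul_one]

theorem KbarV_ThbarV_mul_sub_one {M : ℕ} (hM : Odd M) (n : ℕ) :
    KbarV M (ThbarV M n) * (-cexp (-2 * I * ↑(n * π / M)) - 1) =
      -cexp (-2 * I * ↑(n * π / M)) + 1 := by
  rw [KbarV, hM.neg_one_pow, sum_congr rfl fun k hk => by
    rw [thN_ThbarV M n (mem_Icc.1 hk).2, neg_one_pow_mul_cexp]]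
  linear_combination (-1 : ℂ) * geom_sum_Icc_mul_sub_one (-cexp (-2 * I * ↑(n * π / M)))
    hM.pos hM.pos - neg_cexp_neg_two_mul_I_pow hM n

theorem HbarV_ThbarV_mul_sub_one {M : ℕ} (hM : Odd M) (n : ℕ) {l : ℕ} (hl : l ≤ M - 1) :
    HbarV M (ThbarV M n) l * (-cexp (-2 * I * ↑(n * π / M)) - 1) =
      -cexp (-2 * I * ↑(n * π / M)) + 1 := by
  set q := -cexp (-2 * I * ↑(n * π / M))
  set ζ := -cexp (2 * I * ↑(n * π / M))
  have hζq : ζ * q = 1 := by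
    rw [neg_mul_neg, ← Complex.exp_add]
    ring_nf
    exact Complex.exp_zero
  have hterm : ∀ k ≤ M - 1, (-1 : ℂ) ^ (l + k) *
      cexp (2 * I * ↑(thN M (ThbarV M n) l - thN M (ThbarV M n) k)) = ζ ^ l * q ^ k :=
    fun k hk => by
      rw [thN_ThbarV M n hl, thN_ThbarV M n hk, cexp_two_mul_I_sub, pow_add,
        ← neg_one_pow_mul_cexp, ← neg_one_pow_mul_cexp]
      ring
  have hqM : q ^ M = -1 := neg_cexp_neg_two_mul_I_pow hM n
  rw [HbarV, hM.neg_one_pow, sum_congr rfl fun k hk => hterm k (by simp at hk; omega),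
    sum_congr rfl fun k hk => hterm k (mem_Icc.1 hk).2, ← mul_sum, ← mul_sum]
  clear_value q ζ
  linear_combination ζ ^ l * geom_sum_mul q l -
    ζ ^ l * geom_sum_Icc_mul_sub_one q (by omega : l ≤ M) hM.pos - ζ ^ l * hqM +
    2 * congrArg (· ^ l) hζq

theorem KbarV_ThbarV {M : ℕ} (hM : Odd M) (n : ℕ) :
    KbarV M (ThbarV M n) = -I * ↑(Real.tan (n * π / M)) :=
  eq_of_mul_sub_one_eq (KbarV_ThbarV_mul_sub_one hM n)
    (neg_I_mul_tan_mul_sub_one _ (cos_nat_mul_pi_div_ne_zero hM n))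

theorem HbarV_ThbarV {M : ℕ} (hM : Odd M) (n : ℕ) {l : ℕ} (hl : l ≤ M - 1) :
    HbarV M (ThbarV M n) l = KbarV M (ThbarV M n) :=
  eq_of_mul_sub_one_eq (HbarV_ThbarV_mul_sub_one hM n hl) (KbarV_ThbarV_mul_sub_one hM n)

theorem sin_sq_mul_partialF_ThbarV {M n l : ℕ} (hM : Odd M) (hl : l ≤ M - 1) {j : Fin (M - 1)}
    {A B : ℂ} (hA : HasDerivAt (fun t => HbarV M (update (ThbarV M n) j t) l) A (ThbarV M n j))
    (hB : HasDerivAt (fun t => KbarV M (update (ThbarV M n) j t)) B (ThbarV M n j)) :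
    Real.sin (n * π / M) ^ 2 * partialF M l (ThbarV M n) j =
      Real.sin (n * π / M) * Real.cos (n * π / M) * (A - B).re := by
  by_cases hs : Real.sin (n * π / M) = 0
  · simp [hs]
  have hc := cos_nat_mul_pi_div_ne_zero hM n
  have hK0 : KbarV M (ThbarV M n) ≠ 0 := by
    rw [KbarV_ThbarV hM, Real.tan_eq_sin_div_cos]
    exact mul_ne_zero (neg_ne_zero.2 I_ne_zero) (Complex.ofReal_ne_zero.2 (div_ne_zero hs hc))
  rw [partialF_eq_im hA hB hK0, HbarV_ThbarV hM n hl, KbarV_ThbarV hM, sin_sq_mul_im_div hs hc]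

theorem sin_sq_mul_partialF_ThbarV_self {M : ℕ} (hM : Odd M) (n : ℕ) {m : ℕ} (hm1 : 1 ≤ m)
    (hm2 : m ≤ M - 1) :
    Real.sin (n * π / M) ^ 2 * partialF M m (ThbarV M n) ⟨m - 1, sub_one_lt_sub_one_of_le hm1 hm2⟩ =
      2 * Real.sin (n * π / M) ^ 2 -
        (-1) ^ m * Real.sin (2 * (n * π / M)) * Real.sin (2 * (m * (n * π / M))) := by
  rw [sin_sq_mul_partialF_ThbarV hM hm2 (hasDerivAt_HbarV_update_self _ hm1 hm2)
      (hasDerivAt_KbarV_update _ hm1 hm2),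
    HbarV_ThbarV hM n hm2, KbarV_ThbarV hM, ThbarV_apply M n hm1 hm2, hM.neg_one_pow]
  simp [Complex.exp_re, Complex.exp_im, neg_one_pow_re, neg_one_pow_im, -Complex.ofReal_tan]
  rw [Real.tan_eq_sin_div_cos, Real.sin_two_mul (n * π / M)]
  field_simp [cos_nat_mul_pi_div_ne_zero hM n]

theorem sin_sq_mul_partialF_ThbarV_of_ne {M : ℕ} (hM : Odd M) (n : ℕ) {l m : ℕ}
    (hl : l ≤ M - 1) (hm1 : 1 ≤ m) (hm2 : m ≤ M - 1) (hlm : l ≠ m) :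
    Real.sin (n * π / M) ^ 2 * partialF M l (ThbarV M n) ⟨m - 1, sub_one_lt_sub_one_of_le hm1 hm2⟩ =
      (-1) ^ (m + 1) * Real.sin (2 * (n * π / M)) * (Real.sin (2 * (m * (n * π / M))) -
        (if m < l then 1 else -1) * (-1) ^ l * Real.sin (2 * ((l - m) * (n * π / M)))) := by
  rw [sin_sq_mul_partialF_ThbarV hM hl (hasDerivAt_HbarV_update_of_ne _ hm1 hm2 hlm)
      (hasDerivAt_KbarV_update _ hm1 hm2),
    thN_ThbarV M n hl, ThbarV_apply M n hm1 hm2, hM.neg_one_pow, Real.sin_two_mul (n * π / M),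
    show 2 * ((l - m) * (n * π / M)) = 2 * (l * (n * π / M)) - 2 * (m * (n * π / M)) by ring,
    Real.sin_sub]
  split_ifs <;> simp [Complex.exp_re, Complex.exp_im, neg_one_pow_re, neg_one_pow_im] <;> ring

theorem grad_Fbar_at_thbar (M n : ℕ) (hModd : Odd M) :
    ∀ l m : ℕ, ∀ (_hl1 : 1 ≤ l) (_hl2 : l ≤ M - 1) (hm1 : 1 ≤ m) (hm2 : m ≤ M - 1),
      (l = m →
        Real.sin (thbarZ M n 1) ^ 2 * partialF M l (ThbarV M n) ⟨m - 1, by omega⟩ =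
          2 * Real.sin (thbarZ M n 1) ^ 2 -
            (-1 : ℝ) ^ m * Real.sin (2 * thbarZ M n 1) * Real.sin (2 * thbarZ M n m)) ∧
      (l < m →
        Real.sin (thbarZ M n 1) ^ 2 * partialF M l (ThbarV M n) ⟨m - 1, by omega⟩ =
          (-1 : ℝ) ^ (m + 1) * Real.sin (2 * thbarZ M n 1) *
            (Real.sin (2 * thbarZ M n m) +
              (-1 : ℝ) ^ l * Real.sin (2 * thbarZ M n ((l : ℤ) - (m : ℤ))))) ∧
      (m < l →
        Real.sin (thbarZ M n 1) ^ 2 * partialF M l (ThbarV M n) ⟨m - 1, by omega⟩ =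
          (-1 : ℝ) ^ (m + 1) * Real.sin (2 * thbarZ M n 1) *
            (Real.sin (2 * thbarZ M n m) -
              (-1 : ℝ) ^ l * Real.sin (2 * thbarZ M n ((l : ℤ) - (m : ℤ))))) := by
  intro l m _hl1 hl2 hm1 hm2
  have hthbarZ : ∀ j : ℤ, thbarZ M n j = j * (n * π / M) := fun j => by rw [thbarZ]; ring
  simp only [hthbarZ, Int.cast_one, one_mul, Int.cast_natCast, Int.cast_sub]
  refine ⟨fun hlm => ?_, fun hlm => ?_, fun hlm => ?_⟩
  · subst hlm
    exact sin_sq_mul_partialF_ThbarV_self hModd n hm1 hm2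
  · rw [sin_sq_mul_partialF_ThbarV_of_ne hModd n hl2 hm1 hm2 hlm.ne, if_neg (by omega)]
    ring
  · rw [sin_sq_mul_partialF_ThbarV_of_ne hModd n hl2 hm1 hm2 hlm.ne', if_pos hlm]
    ring

end
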